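/- Let R be a commutative ring and let 𝓜, α, β, γ ∈ R. Let P, Q, N be 2×2 matrices over R with det(P) = det(Q) = det(N) = 1, tr(P) = 𝓜·P₁₂ − α, tr(Q) = 𝓜·Q₁₂ − β, tr(N) = 𝓜·N₁₂ − γ, and Q = P·N − S(β). Then: (a) tr(P·Q − S(γ)) = 𝓜·(P·Q − S(γ))₁₂ − γ; (b) det(P·Q − S(γ)) = 1; (c) tr(Q·N − S(α)) = 𝓜·(Q·N − S(α))₁₂ − α; (d) det(Q·N − S(α)) = 1. -/

import Mathlib

open Matrix

/-- The matrix `S(k) = [[k, 0], [k·𝓜, k]]`. -/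
def Smat {R : Type*} [CommRing R] (M k : R) : Matrix (Fin 2) (Fin 2) R :=
  !![k, 0; k * M, k]

/-!
Put `δ(A) = 𝓜·A₁₂ − tr A`, a linear functional, so that the trace condition on a Cohn matrix of
parity `k` reads `δ(A) = k`. Since `δ(S(k)) = −2k` and `det(A − S(k)) = det A + k (k + δ(A))`, a
unimodular `A` with `δ(A) = −k` yields a Cohn matrix `A − S(k)` of parity `k`. It therefore
suffices to show `δ(P·Q) = −γ` and `δ(Q·N) = −α`. Expanding `P·Q = P²N − P·S(β)` and
`Q·N = P·N² − S(β)·N`, Cayley–Hamilton `X² = tr X · X − 1` together with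
`δ(X·S(k)) = δ(S(k)·X) = −k tr X` reduces both to `δ(P·N) = −β`, the parity condition on
`Q = P·N − S(β)`.
-/

namespace Matrix

variable {R : Type*} [CommRing R]

theorem mul_self_fin_two (A : Matrix (Fin 2) (Fin 2) R) :
    A * A = A.trace • A - A.det • (1 : Matrix (Fin 2) (Fin 2) R) := by
  ext i j
  fin_cases i <;> fin_cases j <;>
    simp [mul_apply, Fin.sum_univ_two, trace_fin_two, det_fin_two] <;> ring

end Matrix

section CohnParity

variable {R : Type*} [CommRing R]

def IsCohnMatrix (M k : R) (A : Matrix (Fin 2) (Fin 2) R) : Prop :=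
  A.trace = M * A 0 1 - k ∧ A.det = 1

def cohnParity (M : R) : Matrix (Fin 2) (Fin 2) R →ₗ[R] R where
  toFun A := M * A 0 1 - A.trace
  map_add' A B := by simp only [Matrix.add_apply, trace_add]; ring
  map_smul' c A := by
    simp only [Matrix.smul_apply, trace_smul, smul_eq_mul, RingHom.id_apply]; ring

variable (M : R)

theorem cohnParity_apply (A : Matrix (Fin 2) (Fin 2) R) :
    cohnParity M A = M * A 0 1 - A.trace :=
  rfl

theorem trace_eq_iff_cohnParity_eq (A : Matrix (Fin 2) (Fin 2) R) (k : R) :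
    A.trace = M * A 0 1 - k ↔ cohnParity M A = k := by
  rw [cohnParity_apply]
  constructor <;> intro h <;> linear_combination -h

theorem cohnParity_Smat (k : R) : cohnParity M (Smat M k) = -2 * k := by
  simp only [cohnParity_apply, Smat, trace_fin_two_of, of_apply, cons_val', cons_val_zero,
    cons_val_one, cons_val_fin_one]
  ring

theorem cohnParity_mul_Smat (A : Matrix (Fin 2) (Fin 2) R) (k : R) :
    cohnParity M (A * Smat M k) = -k * A.trace := by
  rw [cohnParity_apply, Smat, eta_fin_two A, mul_fin_two]
  simp only [trace_fin_two_of, of_apply, cons_val', cons_val_zero, cons_val_one, cons_val_fin_one]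
  ring

theorem cohnParity_Smat_mul (A : Matrix (Fin 2) (Fin 2) R) (k : R) :
    cohnParity M (Smat M k * A) = -k * A.trace := by
  rw [cohnParity_apply, Smat, eta_fin_two A, mul_fin_two]
  simp only [trace_fin_two_of, of_apply, cons_val', cons_val_zero, cons_val_one, cons_val_fin_one]
  ring

theorem det_sub_Smat (A : Matrix (Fin 2) (Fin 2) R) (k : R) :
    (A - Smat M k).det = A.det + k * (k + cohnParity M A) := by
  simp only [cohnParity_apply, Smat, det_fin_two, trace_fin_two, Matrix.sub_apply, of_apply,
    cons_val', cons_val_zero, cons_val_one, cons_val_fin_one]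
  ring

theorem cohnParity_mul_self_mul {A : Matrix (Fin 2) (Fin 2) R} (hA : A.det = 1)
    (B : Matrix (Fin 2) (Fin 2) R) :
    cohnParity M (A * (A * B)) = A.trace * cohnParity M (A * B) - cohnParity M B := by
  rw [← Matrix.mul_assoc, mul_self_fin_two, hA, one_smul, Matrix.sub_mul, Matrix.one_mul,
    Matrix.smul_mul, map_sub, map_smul, smul_eq_mul]

theorem cohnParity_mul_mul_self {B : Matrix (Fin 2) (Fin 2) R} (hB : B.det = 1)
    (A : Matrix (Fin 2) (Fin 2) R) :
    cohnParity M (A * B * B) = B.trace * cohnParity M (A * B) - cohnParity M A := by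
  rw [Matrix.mul_assoc, mul_self_fin_two, hB, one_smul, Matrix.mul_sub, Matrix.mul_one,
    Matrix.mul_smul, map_sub, map_smul, smul_eq_mul]

theorem isCohnMatrix_sub_Smat {A : Matrix (Fin 2) (Fin 2) R} {k : R} (hA : A.det = 1)
    (hδ : cohnParity M A = -k) : IsCohnMatrix M k (A - Smat M k) := by
  refine ⟨(trace_eq_iff_cohnParity_eq M _ k).2 ?_, ?_⟩
  · rw [map_sub, cohnParity_Smat, hδ]; ring
  · rw [det_sub_Smat, hA, hδ]; ring

end CohnParity

/-- If `(P,Q,N)` is a cluster generalized Cohn triple with parities `(α,β,γ)`, then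
`P·Q − S(γ)` and `Q·N − S(α)` again satisfy the trace and determinant conditions of
cluster generalized Cohn matrices. -/
theorem cohn_propagation_trace_det {R : Type*} [CommRing R] (M α β γ : R)
    (P Q N : Matrix (Fin 2) (Fin 2) R)
    (hPdet : P.det = 1) (hQdet : Q.det = 1) (hNdet : N.det = 1)
    (htrP : P.trace = M * P 0 1 - α) (htrQ : Q.trace = M * Q 0 1 - β)
    (htrN : N.trace = M * N 0 1 - γ)
    (hQ : Q = P * N - Smat M β) :
    (P * Q - Smat M γ).trace = M * (P * Q - Smat M γ) 0 1 - γ ∧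
    (P * Q - Smat M γ).det = 1 ∧
    (Q * N - Smat M α).trace = M * (Q * N - Smat M α) 0 1 - α ∧
    (Q * N - Smat M α).det = 1 := by
  rw [trace_eq_iff_cohnParity_eq] at htrP htrQ htrN
  have hPN : cohnParity M (P * N) = -β := by
    rw [hQ, map_sub, cohnParity_Smat] at htrQ
    linear_combination htrQ
  have hPQ : cohnParity M (P * Q) = -γ := by
    rw [hQ, Matrix.mul_sub, map_sub, cohnParity_mul_self_mul M hPdet, cohnParity_mul_Smat,
      hPN, htrN]
    ring
  have hQN : cohnParity M (Q * N) = -α := by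
    rw [hQ, Matrix.sub_mul, map_sub, cohnParity_mul_mul_self M hNdet, cohnParity_Smat_mul,
      hPN, htrP]
    ring
  obtain ⟨hPQtr, hPQdet⟩ :=
    isCohnMatrix_sub_Smat M (by rw [det_mul, hPdet, hQdet, one_mul]) hPQ
  obtain ⟨hQNtr, hQNdet⟩ :=
    isCohnMatrix_sub_Smat M (by rw [det_mul, hQdet, hNdet, one_mul]) hQN
  exact ⟨hPQtr, hPQdet, hQNtr, hQNdet⟩
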